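/- Let R = MvPolynomial (Fin m) ℂ and F ∈ R. Let (A₁, B₁) be a matrix factorization of F and (A₂, B₂) a matrix factorization of −F (finite-rank, over R), and let E := fromBlocks (A₁ ⊗ₖ 1) (−(1 ⊗ₖ B₂)) (1 ⊗ₖ A₂) (B₁ ⊗ₖ 1) and O := fromBlocks (B₁ ⊗ₖ 1) (1 ⊗ₖ B₂) (−(1 ⊗ₖ A₂)) (A₁ ⊗ₖ 1) be the tensor-product matrices, so that O * E = 0 and E * O = 0 and (E, O) is a two-periodic complex of free R-modules. Then the homology of this complex is annihilated by every partial derivative of F: for every i : Fin m and every vector v in the kernel of mulVec E, the vector (pderiv i F) • v lies in the range of mulVec O, and for every vector w in the kernel of mulVec O, the vector (pderiv i F) • w lies in the range of mulVec E. -/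

import Mathlib

/-!
Differentiating `A₁ * B₁ = F • 1` and `B₁ * A₁ = F • 1` entrywise gives
`A₁ * ∂B₁ + ∂A₁ * B₁ = ∂F • 1` and `B₁ * ∂A₁ + ∂B₁ * A₁ = ∂F • 1`. Hence the tensor product of the pair
`(∂A₁, ∂B₁)` with the identity of the second factor is a homotopy from multiplication by `∂F` to zero
on the tensor-product complex, and a null-homotopic endomorphism annihilates homology.
-/

open Matrix Kronecker MvPolynomial

namespace Matrix

variable {R S : Type*} [CommSemiring R] [CommSemiring S] [Algebra R S]

theorem map_derivation_mul {l m n : Type*} [Fintype m] (D : Derivation R S S)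
    (M : Matrix l m S) (N : Matrix m n S) :
    (M * N).map D = M * N.map D + M.map D * N := by
  ext i k
  simp only [map_apply, mul_apply, add_apply, map_sum, Derivation.leibniz, smul_eq_mul,
    ← Finset.sum_add_distrib]
  exact Finset.sum_congr rfl fun j _ => by ring

theorem map_derivation_smul_one {n : Type*} [DecidableEq n] (D : Derivation R S S) (c : S) :
    (c • (1 : Matrix n n S)).map D = D c • 1 := by
  ext i j
  by_cases h : i = j <;> simp [h]

theorem mulVec_mulVec_eq_smul_of_homotopy {X Y : Type*} [Fintype X] [Fintype Y] [DecidableEq Y]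
    {E K : Matrix X Y S} {O L : Matrix Y X S} {c : S} (h : O * K + L * E = c • 1)
    {v : Y → S} (hv : E *ᵥ v = 0) : O *ᵥ (K *ᵥ v) = c • v := by
  have := congrArg (· *ᵥ v) h
  simpa only [add_mulVec, ← mulVec_mulVec, hv, mulVec_zero, add_zero, smul_mulVec,
    one_mulVec] using this

end Matrix

section TensorFactorization

variable {R : Type*} [CommRing R] {p₁ q₁ p₂ q₂ : Type*}
  [Fintype p₁] [Fintype q₁] [Fintype p₂] [Fintype q₂]
  [DecidableEq p₁] [DecidableEq q₁] [DecidableEq p₂] [DecidableEq q₂]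

def tensorFactorizationEven (A₁ : Matrix q₁ p₁ R) (B₁ : Matrix p₁ q₁ R)
    (A₂ : Matrix q₂ p₂ R) (B₂ : Matrix p₂ q₂ R) :
    Matrix (q₁ × p₂ ⊕ p₁ × q₂) (p₁ × p₂ ⊕ q₁ × q₂) R :=
  fromBlocks (A₁ ⊗ₖ 1) (-(1 ⊗ₖ B₂)) (1 ⊗ₖ A₂) (B₁ ⊗ₖ 1)

def tensorFactorizationOdd (A₁ : Matrix q₁ p₁ R) (B₁ : Matrix p₁ q₁ R)
    (A₂ : Matrix q₂ p₂ R) (B₂ : Matrix p₂ q₂ R) :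
    Matrix (p₁ × p₂ ⊕ q₁ × q₂) (q₁ × p₂ ⊕ p₁ × q₂) R :=
  fromBlocks (B₁ ⊗ₖ 1) (1 ⊗ₖ B₂) (-(1 ⊗ₖ A₂)) (A₁ ⊗ₖ 1)

variable {A₁ dA : Matrix q₁ p₁ R} {B₁ dB : Matrix p₁ q₁ R} {c : R}
  (A₂ : Matrix q₂ p₂ R) (B₂ : Matrix p₂ q₂ R)

/- The off-diagonal blocks cancel: `1 ⊗ₖ B₂` and `dB ⊗ₖ 1` commute, and the Koszul signs of the
differentials make the two mixed products opposite. -/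
theorem tensorFactorizationOdd_mul_add_mul_tensorFactorizationEven
    (hBA : B₁ * dA + dB * A₁ = c • (1 : Matrix p₁ p₁ R))
    (hAB : A₁ * dB + dA * B₁ = c • (1 : Matrix q₁ q₁ R)) :
    tensorFactorizationOdd A₁ B₁ A₂ B₂ * tensorFactorizationEven dA dB (0 : Matrix q₂ p₂ R) 0 +
      tensorFactorizationOdd dA dB (0 : Matrix q₂ p₂ R) 0 * tensorFactorizationEven A₁ B₁ A₂ B₂ =
        c • 1 := by
  rw [tensorFactorizationOdd, tensorFactorizationEven, tensorFactorizationOdd,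
    tensorFactorizationEven, fromBlocks_multiply, fromBlocks_multiply, fromBlocks_add,
    ← fromBlocks_one, fromBlocks_smul]
  simp only [kronecker_zero, neg_zero, Matrix.mul_zero, Matrix.zero_mul, add_zero, zero_add,
    Matrix.mul_neg, Matrix.neg_mul, ← mul_kronecker_mul, Matrix.one_mul, Matrix.mul_one,
    ← add_kronecker, hBA, hAB, smul_kronecker, one_kronecker_one, smul_zero, add_neg_cancel,
    neg_add_cancel]

theorem tensorFactorizationEven_mul_add_mul_tensorFactorizationOdd
    (hBA : B₁ * dA + dB * A₁ = c • (1 : Matrix p₁ p₁ R))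
    (hAB : A₁ * dB + dA * B₁ = c • (1 : Matrix q₁ q₁ R)) :
    tensorFactorizationEven A₁ B₁ A₂ B₂ * tensorFactorizationOdd dA dB (0 : Matrix q₂ p₂ R) 0 +
      tensorFactorizationEven dA dB (0 : Matrix q₂ p₂ R) 0 * tensorFactorizationOdd A₁ B₁ A₂ B₂ =
        c • 1 := by
  rw [tensorFactorizationOdd, tensorFactorizationEven, tensorFactorizationOdd,
    tensorFactorizationEven, fromBlocks_multiply, fromBlocks_multiply, fromBlocks_add,
    ← fromBlocks_one, fromBlocks_smul]
  simp only [kronecker_zero, neg_zero, Matrix.mul_zero, Matrix.zero_mul, add_zero, zero_add,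
    Matrix.mul_neg, Matrix.neg_mul, ← mul_kronecker_mul, Matrix.one_mul, Matrix.mul_one,
    ← add_kronecker, hBA, hAB, smul_kronecker, one_kronecker_one, smul_zero, add_neg_cancel,
    neg_add_cancel]

end TensorFactorization

theorem homology_of_tensor_product_supported_on_critical_locus_general
    (m p₁ q₁ p₂ q₂ : ℕ) (F : MvPolynomial (Fin m) ℂ)
    (A₁ : Matrix (Fin q₁) (Fin p₁) (MvPolynomial (Fin m) ℂ))
    (B₁ : Matrix (Fin p₁) (Fin q₁) (MvPolynomial (Fin m) ℂ))
    (A₂ : Matrix (Fin q₂) (Fin p₂) (MvPolynomial (Fin m) ℂ))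
    (B₂ : Matrix (Fin p₂) (Fin q₂) (MvPolynomial (Fin m) ℂ))
    (h₁ : A₁ * B₁ = F • (1 : Matrix (Fin q₁) (Fin q₁) (MvPolynomial (Fin m) ℂ)))
    (h₁' : B₁ * A₁ = F • (1 : Matrix (Fin p₁) (Fin p₁) (MvPolynomial (Fin m) ℂ)))
    (E : Matrix ((Fin q₁ × Fin p₂) ⊕ (Fin p₁ × Fin q₂)) ((Fin p₁ × Fin p₂) ⊕ (Fin q₁ × Fin q₂))
      (MvPolynomial (Fin m) ℂ))
    (O : Matrix ((Fin p₁ × Fin p₂) ⊕ (Fin q₁ × Fin q₂)) ((Fin q₁ × Fin p₂) ⊕ (Fin p₁ × Fin q₂))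
      (MvPolynomial (Fin m) ℂ))
    (hE : E = fromBlocks (A₁ ⊗ₖ 1) (-(1 ⊗ₖ B₂)) (1 ⊗ₖ A₂) (B₁ ⊗ₖ 1))
    (hO : O = fromBlocks (B₁ ⊗ₖ 1) (1 ⊗ₖ B₂) (-(1 ⊗ₖ A₂)) (A₁ ⊗ₖ 1)) :
    ∀ i : Fin m,
      (∀ v : ((Fin p₁ × Fin p₂) ⊕ (Fin q₁ × Fin q₂)) → MvPolynomial (Fin m) ℂ,
        E.mulVec v = 0 → ∃ u, O.mulVec u = (pderiv i F) • v) ∧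
      (∀ w : ((Fin q₁ × Fin p₂) ⊕ (Fin p₁ × Fin q₂)) → MvPolynomial (Fin m) ℂ,
        O.mulVec w = 0 → ∃ u, E.mulVec u = (pderiv i F) • w) := by
  intro i
  replace hE : E = tensorFactorizationEven A₁ B₁ A₂ B₂ := hE
  replace hO : O = tensorFactorizationOdd A₁ B₁ A₂ B₂ := hO
  subst hE hO
  have hBA : B₁ * A₁.map (pderiv i) + B₁.map (pderiv i) * A₁ = pderiv i F • 1 := by
    rw [← map_derivation_mul, h₁', map_derivation_smul_one]
  have hAB : A₁ * B₁.map (pderiv i) + A₁.map (pderiv i) * B₁ = pderiv i F • 1 := by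
    rw [← map_derivation_mul, h₁, map_derivation_smul_one]
  exact ⟨fun v hv => ⟨_, mulVec_mulVec_eq_smul_of_homotopy
      (tensorFactorizationOdd_mul_add_mul_tensorFactorizationEven A₂ B₂ hBA hAB) hv⟩,
    fun w hw => ⟨_, mulVec_mulVec_eq_smul_of_homotopy
      (tensorFactorizationEven_mul_add_mul_tensorFactorizationOdd A₂ B₂ hBA hAB) hw⟩⟩

theorem homology_of_tensor_product_supported_on_critical_locus
    (m p₁ q₁ p₂ q₂ : ℕ) (F : MvPolynomial (Fin m) ℂ)
    (A₁ : Matrix (Fin q₁) (Fin p₁) (MvPolynomial (Fin m) ℂ))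
    (B₁ : Matrix (Fin p₁) (Fin q₁) (MvPolynomial (Fin m) ℂ))
    (A₂ : Matrix (Fin q₂) (Fin p₂) (MvPolynomial (Fin m) ℂ))
    (B₂ : Matrix (Fin p₂) (Fin q₂) (MvPolynomial (Fin m) ℂ))
    (h₁ : A₁ * B₁ = F • (1 : Matrix (Fin q₁) (Fin q₁) (MvPolynomial (Fin m) ℂ)))
    (h₁' : B₁ * A₁ = F • (1 : Matrix (Fin p₁) (Fin p₁) (MvPolynomial (Fin m) ℂ)))
    (h₂ : A₂ * B₂ = (-F) • (1 : Matrix (Fin q₂) (Fin q₂) (MvPolynomial (Fin m) ℂ)))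
    (h₂' : B₂ * A₂ = (-F) • (1 : Matrix (Fin p₂) (Fin p₂) (MvPolynomial (Fin m) ℂ)))
    (E : Matrix ((Fin q₁ × Fin p₂) ⊕ (Fin p₁ × Fin q₂)) ((Fin p₁ × Fin p₂) ⊕ (Fin q₁ × Fin q₂))
      (MvPolynomial (Fin m) ℂ))
    (O : Matrix ((Fin p₁ × Fin p₂) ⊕ (Fin q₁ × Fin q₂)) ((Fin q₁ × Fin p₂) ⊕ (Fin p₁ × Fin q₂))
      (MvPolynomial (Fin m) ℂ))
    (hE : E = fromBlocks (A₁ ⊗ₖ 1) (-(1 ⊗ₖ B₂)) (1 ⊗ₖ A₂) (B₁ ⊗ₖ 1))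
    (hO : O = fromBlocks (B₁ ⊗ₖ 1) (1 ⊗ₖ B₂) (-(1 ⊗ₖ A₂)) (A₁ ⊗ₖ 1))
    (hOE : O * E = 0) (hEO : E * O = 0) :
    ∀ i : Fin m,
      (∀ v : ((Fin p₁ × Fin p₂) ⊕ (Fin q₁ × Fin q₂)) → MvPolynomial (Fin m) ℂ,
        E.mulVec v = 0 → ∃ u, O.mulVec u = (pderiv i F) • v) ∧
      (∀ w : ((Fin q₁ × Fin p₂) ⊕ (Fin p₁ × Fin q₂)) → MvPolynomial (Fin m) ℂ,
        O.mulVec w = 0 → ∃ u, E.mulVec u = (pderiv i F) • w) :=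
  homology_of_tensor_product_supported_on_critical_locus_general m p₁ q₁ p₂ q₂ F A₁ B₁ A₂ B₂ h₁ h₁'
    E O hE hO
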